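/- Let X be a complete length space, x ∈ X, k > 1 and L > 0, and suppose that for every r > L the natural inclusion-induced map G(x, r, kr) → π₁(X, x) is an isomorphism. For α > 0 let X_α denote the metric space (X, d_X/α) and let G^{α} denote the corresponding relative δ-groups computed in X_α. Then for any r' > 0 and δ > 0 there exists A > 0 such that for all α ≥ A the group G^{α}(x, r', (k+1)r', δ) is trivial. -/

import Mathlib

open Metric unitInterval CategoryTheory
open scoped FundamentalGroupoid ENNReal Manifold

universe u

noncomputable section

/-- The length of a path in a pseudo-emetric space, as the total variation of the
parametrization. -/
def pathLength {X : Type u} [PseudoEMetricSpace X] {x y : X} (γ : Path x y) : ℝ≥0∞ :=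
  eVariationOn γ Set.univ

/-- A (pseudo-e)metric space is a *length space* if the distance between any two points is
the infimum of the lengths of paths joining them. -/
def IsLengthSpace (X : Type u) [PseudoEMetricSpace X] : Prop :=
  ∀ x y : X, edist x y = ⨅ γ : Path x y, pathLength γ

/-- Two loops are homotopic (rel endpoints) *within* the set `S` if there is a path homotopy
between them whose image is contained in `S`. -/
def HomotopicIn {X : Type u} [TopologicalSpace X] {x y : X} (γ₁ γ₂ : Path x y) (S : Set X) :
    Prop :=
  ∃ H : Path.Homotopy γ₁ γ₂, ∀ z : I × I, H z ∈ S

/-- A loop is nullhomotopic within the set `S`. -/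
def NullHomotopicIn {X : Type u} [TopologicalSpace X] {x : X} (γ : Path x x) (S : Set X) :
    Prop :=
  HomotopicIn γ (Path.refl x) S

/-- The homomorphism on fundamental groups induced by a continuous map. -/
def indHom {X Y : Type u} [TopologicalSpace X] [TopologicalSpace Y]
    (f : C(X, Y)) (x : X) : FundamentalGroup X x →* FundamentalGroup Y (f x) :=
  Functor.mapEnd (FundamentalGroupoid.mk x)
    (πₘ (TopCat.ofHom f : TopCat.of X ⟶ TopCat.of Y))

/-- The class of a loop in the fundamental group. -/
def pathClass {X : Type u} [TopologicalSpace X] {x : X} (γ : Path x x) :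
    FundamentalGroup X x :=
  @FundamentalGroup.fromPath (TopCat.of X) _ x ⟦γ⟧

/-- The basepoint `p` as a point of the closed ball `B̄_p(r)`. -/
def pcb {X : Type u} [MetricSpace X] (p : X) {r : ℝ} (h0 : 0 ≤ r) : closedBall p r :=
  ⟨p, mem_closedBall_self h0⟩

/-- The basepoint `p` as a point of the open ball `B_p(R)`. -/
def ctr {X : Type u} [MetricSpace X] (p : X) {R : ℝ} (hR : 0 < R) : ball p R :=
  ⟨p, mem_ball_self hR⟩

/-- The inclusion of the closed ball `B̄_p(r)` into the open ball `B_p(R)`, `r < R`. -/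
def cbInclusion {X : Type u} [MetricSpace X] (p : X) {r R : ℝ} (h : r < R) :
    C(closedBall p r, ball p R) :=
  ⟨fun z => ⟨z.1, mem_ball.mpr (lt_of_le_of_lt (mem_closedBall.mp z.2) h)⟩,
    Continuous.subtype_mk continuous_subtype_val _⟩

/-- The geometric semi-local fundamental group `G(p,r,R)`: the image of
`π₁(B̄_p(r), p) → π₁(B_p(R), p)`, as a subgroup of `π₁(B_p(R), p)`. -/
def G {X : Type u} [MetricSpace X] (p : X) {r R : ℝ} (h0 : 0 ≤ r) (hrR : r < R) :
    Subgroup (FundamentalGroup (ball p R) (ctr p (h0.trans_lt hrR))) :=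
  (indHom (cbInclusion p hrR) (pcb p h0)).range

/-- The homomorphism `π₁(B_p(R), p) → π₁(X, p)` induced by inclusion. -/
def toAmb {X : Type u} [MetricSpace X] (p : X) {R : ℝ} (hR : 0 < R) :
    FundamentalGroup (ball p R) (ctr p hR) →* FundamentalGroup X p :=
  indHom ⟨Subtype.val, continuous_subtype_val⟩ (ctr p hR)

/-- The homomorphism `π₁(B̄_p(r), p) → π₁(X, p)` induced by inclusion. -/
def cbToAmb {X : Type u} [MetricSpace X] (p : X) {r : ℝ} (h0 : 0 ≤ r) :
    FundamentalGroup (closedBall p r) (pcb p h0) →* FundamentalGroup X p :=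
  indHom ⟨Subtype.val, continuous_subtype_val⟩ (pcb p h0)

end
/-- A `δ`-loop based at `p`: a loop of the form `α * β * α⁻¹` where `β` is a closed path lying
in some ball of radius `δ` and `α` is a path from `p` to `β 0`. -/
def IsDeltaLoop {X : Type u} [MetricSpace X] {p : X} (δ : ℝ) (γ : Path p p) : Prop :=
  ∃ (z c : X) (α : Path p z) (β : Path z z),
    (∀ t, β t ∈ ball c δ) ∧ γ = (α.trans β).trans α.symm

/-- The concatenation of a finite list of loops based at `p`. -/
noncomputable def loopProd {X : Type u} [TopologicalSpace X] {p : X} (l : List (Path p p)) : Path p p :=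
  l.foldr Path.trans (Path.refl p)

/-- Triviality of the relative `δ`-group `G(x, r, R, δ)`: every loop based at `x` with image in
the closed ball `B̄_x(r)` is homotopic, within the open ball `B_x(R)`, to a finite product of
`δ`-loops. -/
def DeltaTrivial {X : Type u} [MetricSpace X] (x : X) (r R δ : ℝ) : Prop :=
  ∀ γ : Path x x, (∀ t, γ t ∈ closedBall x r) →
    ∃ l : List (Path x x), (∀ γ' ∈ l, IsDeltaLoop δ γ') ∧
      HomotopicIn γ (loopProd l) (ball x R)


/-- Type synonym for `X` equipped with the rescaled metric `dist / α`. -/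
def Rescale (_α : ℝ) (X : Type u) : Type u := X

/-- The identity map into the rescaled space. -/
def Rescale.mk (α : ℝ) {X : Type u} (x : X) : Rescale α X := x

/-- The metric space `(X, d_X / α)` for `α > 0`. -/
noncomputable def rescaleMetricSpace (X : Type u) [MetricSpace X] {α : ℝ} (hα : 0 < α) :
    MetricSpace (Rescale α X) where
  dist x y := dist (show X from x) (show X from y) / α
  dist_self x := by
    exact (congrArg (· / α) (dist_self (show X from x))).trans (zero_div α)
  dist_comm x y := by
    exact congrArg (· / α) (dist_comm (show X from x) (show X from y))
  dist_triangle x y z := by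
    dsimp only
    rw [← add_div]
    gcongr
    exact dist_triangle _ _ _
  eq_of_dist_eq_zero := by
    intro x y h
    dsimp only at h
    rcases div_eq_zero_iff.mp h with h' | h'
    · have : (show X from x) = (show X from y) := eq_of_dist_eq_zero h'
      exact this
    · exact absurd h' (ne_of_gt hα)

/-!
A loop `γ` in the closed `r'`-ball of `X_α` is a loop in the closed `α r'`-ball of `X`.
Surjectivity of `G(x, 2L, 2kL) → π₁(X, x)` gives a loop `β` in the closed `2L`-ball homotopic
to `γ` in `X`; injectivity of `G(x, α r', k α r') → π₁(X, x)` upgrades this to a homotopy inside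
the `k α r'`-ball of `X`, which is the `k r'`-ball of `X_α`. Once `α ≥ (2L + 1) / min r' δ`,
the loop `β` lies in a `δ`-ball of `X_α`, so it is itself a `δ`-loop.
-/

lemma pathClass_surjective {Y : Type u} [TopologicalSpace Y] {y : Y} :
    Function.Surjective (pathClass : Path y y → FundamentalGroup Y y) :=
  Path.Homotopic.Quotient.mk_surjective

lemma pathClass_eq_pathClass_iff {Y : Type u} [TopologicalSpace Y] {y : Y} {γ₁ γ₂ : Path y y} :
    pathClass γ₁ = pathClass γ₂ ↔ γ₁.Homotopic γ₂ :=
  Path.Homotopic.Quotient.eq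

def Path.codRestrict {Y : Type u} [TopologicalSpace Y] {a b : Y} (γ : Path a b) (S : Set Y)
    (hγ : ∀ t, γ t ∈ S) : Path (⟨a, γ.source ▸ hγ 0⟩ : S) ⟨b, γ.target ▸ hγ 1⟩ where
  toFun t := ⟨γ t, hγ t⟩
  continuous_toFun := γ.continuous.subtype_mk hγ
  source' := Subtype.ext γ.source
  target' := Subtype.ext γ.target

section HomotopicIn

variable {Y Z : Type u} [TopologicalSpace Y] [TopologicalSpace Z] {a b : Y}

lemma HomotopicIn.trans {γ₁ γ₂ γ₃ : Path a b} {S : Set Y} (h₁₂ : HomotopicIn γ₁ γ₂ S)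
    (h₂₃ : HomotopicIn γ₂ γ₃ S) : HomotopicIn γ₁ γ₃ S := by
  obtain ⟨F, hF⟩ := h₁₂
  obtain ⟨H, hH⟩ := h₂₃
  refine ⟨F.trans H, fun z => ?_⟩
  rw [Path.Homotopy.trans_apply]
  split_ifs
  exacts [hF _, hH _]

lemma HomotopicIn.map {γ₁ γ₂ : Path a b} {S : Set Y} (h : HomotopicIn γ₁ γ₂ S) (f : C(Y, Z))
    {T : Set Z} (hf : Set.MapsTo f S T) :
    HomotopicIn (γ₁.map f.continuous) (γ₂.map f.continuous) T := by
  obtain ⟨F, hF⟩ := h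
  exact ⟨F.map f, fun z => hf (hF z)⟩

lemma HomotopicIn.mem_right {γ₁ γ₂ : Path a b} {S : Set Y} (h : HomotopicIn γ₁ γ₂ S) (t : I) :
    γ₂ t ∈ S := by
  obtain ⟨F, hF⟩ := h
  simpa using hF (1, t)

lemma Path.Homotopic.homotopicIn_map_val {S : Set Y} {a b : S} {γ₁ γ₂ : Path a b}
    (h : γ₁.Homotopic γ₂) :
    HomotopicIn (γ₁.map continuous_subtype_val) (γ₂.map continuous_subtype_val) S := by
  obtain ⟨F⟩ := h
  exact ⟨F.map ⟨Subtype.val, continuous_subtype_val⟩, fun z => (F z).2⟩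

end HomotopicIn

lemma exists_deltaLoops_of_homotopicIn {Y : Type u} [MetricSpace Y] {p c : Y} {δ : ℝ}
    {γ β : Path p p} {S : Set Y} (h : HomotopicIn γ β S) (hβ : ∀ t, β t ∈ ball c δ) :
    ∃ l : List (Path p p), (∀ γ' ∈ l, IsDeltaLoop δ γ') ∧ HomotopicIn γ (loopProd l) S := by
  refine ⟨[((Path.refl p).trans β).trans (Path.refl p).symm],
    fun γ' hγ' => ⟨p, c, Path.refl p, β, hβ, List.mem_singleton.mp hγ'⟩, h.trans ?_⟩
  set β' := β.codRestrict S h.mem_right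
  have hβ' : β'.Homotopic ((((Path.refl _).trans β').trans (Path.refl _).symm).trans
      (Path.refl _)) := by
    rw [Path.refl_symm]
    exact (Path.Homotopic.trans ⟨Path.Homotopy.transRefl _⟩
      (Path.Homotopic.trans ⟨Path.Homotopy.transRefl _⟩ ⟨Path.Homotopy.reflTrans _⟩)).symm
  have hβS := hβ'.homotopicIn_map_val
  simp only [Path.map_trans] at hβS
  exact hβS

section SemiLocal

variable {X : Type u} [MetricSpace X] {x : X} {r R : ℝ}

lemma exists_homotopic_loop_in_closedBall (h0 : 0 ≤ r) (hrR : r < R)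
    (hsurj : Function.Surjective ((toAmb x (h0.trans_lt hrR)).comp (G x h0 hrR).subtype))
    (γ : Path x x) : ∃ β : Path x x, (∀ t, β t ∈ closedBall x r) ∧ β.Homotopic γ := by
  obtain ⟨⟨_, g, rfl⟩, hg⟩ := hsurj (pathClass γ)
  obtain ⟨β, rfl⟩ := pathClass_surjective g
  exact ⟨β.map continuous_subtype_val, fun t => (β t).2, pathClass_eq_pathClass_iff.mp hg⟩

lemma homotopicIn_ball_of_homotopic (h0 : 0 ≤ r) (hrR : r < R)
    (hinj : Function.Injective ((toAmb x (h0.trans_lt hrR)).comp (G x h0 hrR).subtype))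
    {γ₁ γ₂ : Path x x} (h₁ : ∀ t, γ₁ t ∈ closedBall x r) (h₂ : ∀ t, γ₂ t ∈ closedBall x r)
    (h : γ₁.Homotopic γ₂) : HomotopicIn γ₁ γ₂ (ball x R) := by
  set ι := cbInclusion x hrR
  have hclass : indHom ι (pcb x h0) (pathClass (γ₁.codRestrict _ h₁)) =
      indHom ι (pcb x h0) (pathClass (γ₂.codRestrict _ h₂)) :=
    congrArg Subtype.val <| hinj (a₁ := ⟨_, pathClass (γ₁.codRestrict _ h₁), rfl⟩)
      (a₂ := ⟨_, pathClass (γ₂.codRestrict _ h₂), rfl⟩) (pathClass_eq_pathClass_iff.mpr h)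
  exact (pathClass_eq_pathClass_iff.mp hclass).homotopicIn_map_val

end SemiLocal

section Rescale

variable {X : Type u} [MetricSpace X] {α : ℝ}

lemma rescale_dist (hα : 0 < α) (y z : X) :
    letI := rescaleMetricSpace X hα
    dist (Rescale.mk α y) (Rescale.mk α z) = dist y z / α :=
  rfl

lemma rescale_mem_ball_iff (hα : 0 < α) {y z : X} {ε : ℝ} :
    letI := rescaleMetricSpace X hα
    Rescale.mk α y ∈ ball (Rescale.mk α z) ε ↔ y ∈ ball z (α * ε) := by
  simp only [mem_ball, rescale_dist, div_lt_iff₀ hα, mul_comm α]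

lemma rescale_mem_closedBall_iff (hα : 0 < α) {y z : X} {ε : ℝ} :
    letI := rescaleMetricSpace X hα
    Rescale.mk α y ∈ closedBall (Rescale.mk α z) ε ↔ y ∈ closedBall z (α * ε) := by
  simp only [mem_closedBall, rescale_dist, div_le_iff₀ hα, mul_comm α]

lemma lipschitzWith_rescale_mk (hα : 0 < α) :
    letI := rescaleMetricSpace X hα
    LipschitzWith (Real.toNNReal α⁻¹) (Rescale.mk α : X → Rescale α X) := by
  let := rescaleMetricSpace X hα
  exact LipschitzWith.of_dist_le' fun y z => (div_eq_inv_mul (dist y z) α).le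

lemma lipschitzWith_rescale_val (hα : 0 < α) :
    letI := rescaleMetricSpace X hα
    @LipschitzWith (Rescale α X) X _ _ (Real.toNNReal α) fun y => y := by
  let := rescaleMetricSpace X hα
  exact LipschitzWith.of_dist_le' fun y z => (mul_div_cancel₀ (@dist X _ y z) hα.ne').ge

end Rescale

theorem stmt9 {X : Type u} [MetricSpace X]
    (x : X) (k L : ℝ) (hk : 1 < k) (hL : 0 < L)
    (hiso : ∀ r, ∀ hr : L < r,
      Function.Bijective
        ((toAmb x ((hL.trans hr).trans (by nlinarith : r < k * r))).comp
          (G x (hL.trans hr).le (by nlinarith : r < k * r)).subtype)) :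
    ∀ r', 0 < r' → ∀ δ, 0 < δ → ∃ A > 0, ∀ α, A ≤ α → ∀ hα : 0 < α,
      letI := rescaleMetricSpace X hα
      DeltaTrivial (X := Rescale α X) (Rescale.mk α x) r' ((k + 1) * r') δ := by
  intro r' hr' δ hδ
  refine ⟨(2 * L + 1) / min r' δ, by positivity, fun α hA hα γ hγ => ?_⟩
  let := rescaleMetricSpace X hα
  have hA' : 2 * L + 1 ≤ α * min r' δ := (div_le_iff₀ (lt_min hr' hδ)).mp hA
  have hαr : 2 * L + 1 ≤ α * r' := hA'.trans (mul_le_mul_of_nonneg_left (min_le_left _ _) hα.le)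
  have hαδ : 2 * L + 1 ≤ α * δ := hA'.trans (mul_le_mul_of_nonneg_left (min_le_right _ _) hα.le)
  let γX : Path x x := γ.map (lipschitzWith_rescale_val hα).continuous
  have hγX : ∀ t, γX t ∈ closedBall x (α * r') := fun t =>
    (rescale_mem_closedBall_iff hα).mp (hγ t)
  obtain ⟨β, hβ, hβγ⟩ :=
    exists_homotopic_loop_in_closedBall _ _ (hiso (2 * L) (by linarith)).2 γX
  have hγβ : HomotopicIn γX β (ball x (k * (α * r'))) :=
    homotopicIn_ball_of_homotopic _ _ (hiso (α * r') (by linarith)).1 hγX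
      (fun t => closedBall_subset_closedBall (by linarith) (hβ t)) hβγ.symm
  have hmaps : Set.MapsTo (Rescale.mk α) (ball x (k * (α * r')))
      (ball (Rescale.mk α x) ((k + 1) * r')) := fun y hy =>
    (rescale_mem_ball_iff hα).mpr (ball_subset_ball (by nlinarith) hy)
  refine exists_deltaLoops_of_homotopicIn (c := Rescale.mk α x)
    (hγβ.map ⟨Rescale.mk α, (lipschitzWith_rescale_mk hα).continuous⟩ hmaps) fun t => ?_
  exact (rescale_mem_ball_iff hα).mpr (closedBall_subset_ball (by linarith) (hβ t))
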